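/- arXiv:1811.00898 — 3 statements merged into one kernel-verified Lean document; each statement's English description precedes it below -/
import Mathlib

section
/- Let G be a linear group over a field F (of any characteristic) and A an abelian subgroup central in G. Let π : G → G/[G,G] be the abelianisation map. If A contains no infinite order unipotent element, then the kernel of the restriction of π to A is a torsion group. -/
/-!
Pass to the algebraic closure `K` of `F`. As `a` is central, every eigenspace `E` of `a` is
`G`-invariant, and `g ↦ det (g|E)` is a character of `G`; it is trivial on `a`, which lies in
`[G, G]`. Since `a` acts on `E` by its eigenvalue `μ`, this gives `μ ^ dim E = 1`, so every
eigenvalue of `a` is a `d!`-th root of unity. Hence `a ^ d!` is unipotent, so it has finite order,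
and then so does `a`.
-/

open Module Polynomial

namespace Matrix.GeneralLinearGroup

variable {n F : Type*} [Fintype n] [DecidableEq n] [Field F] (K : Type*) [Field K] [Algebra F K]

def baseChangeRepresentation : Representation K (GL n F) (n → K) :=
  ((toLinAlgEquiv' : Matrix n n K ≃ₐ[K] _).toRingHom.comp
    (algebraMap F K).mapMatrix).toMonoidHom.comp (Units.coeHom _)

variable {K}

theorem pow_sub_one_pow_eq_zero_of_baseChangeRepresentation {g : GL n F} {k m : ℕ}
    (h : (baseChangeRepresentation K g ^ k - 1) ^ m = 0) :
    ((g : Matrix n n F) ^ k - 1) ^ m = 0 := by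
  have hinj : Function.Injective
      ((toLinAlgEquiv' : Matrix n n K ≃ₐ[K] _).toRingHom.comp (algebraMap F K).mapMatrix) :=
    toLinAlgEquiv'.injective.comp (Matrix.map_injective (algebraMap F K).injective)
  rw [← map_eq_zero_iff _ hinj, map_pow, map_sub, map_pow, map_one]
  exact h

end Matrix.GeneralLinearGroup

namespace Module.End

variable {K V : Type*} [Field K] [IsAlgClosed K] [AddCommGroup V] [Module K V]
  [FiniteDimensional K V]

theorem charpoly_eq_X_pow_finrank_of_forall_hasEigenvalue {f : End K V}
    (h : ∀ μ, f.HasEigenvalue μ → μ = 0) : f.charpoly = X ^ finrank K V := by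
  have hroots : f.charpoly.roots = Multiset.replicate (finrank K V) 0 := by
    rw [Multiset.eq_replicate, ← (IsAlgClosed.splits _).natDegree_eq_card_roots,
      LinearMap.charpoly_natDegree]
    refine ⟨rfl, fun μ hμ => h μ ?_⟩
    rw [hasEigenvalue_iff_isRoot_charpoly]
    exact isRoot_of_mem_roots hμ
  rw [(IsAlgClosed.splits _).eq_prod_roots_of_monic f.charpoly_monic, hroots]
  simp

theorem pow_finrank_eq_zero_of_forall_hasEigenvalue {f : End K V}
    (h : ∀ μ, f.HasEigenvalue μ → μ = 0) : f ^ finrank K V = 0 := by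
  simpa [charpoly_eq_X_pow_finrank_of_forall_hasEigenvalue h] using f.aeval_self_charpoly

theorem pow_sub_one_pow_finrank_eq_zero {f : End K V} {n : ℕ} (hn : n ≠ 0)
    (h : ∀ μ, f.HasEigenvalue μ → μ ^ n = 1) : (f ^ n - 1) ^ finrank K V = 0 := by
  refine pow_finrank_eq_zero_of_forall_hasEigenvalue fun ν hν => ?_
  have hdeg : 0 < (X ^ n - C 1 : K[X]).degree := by
    rw [degree_X_pow_sub_C (Nat.pos_of_ne_zero hn)]
    exact_mod_cast Nat.pos_of_ne_zero hn
  have hν' : ν ∈ spectrum K (aeval f (X ^ n - C 1 : K[X])) := by simpa using hν.mem_spectrum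
  rw [spectrum.map_polynomial_aeval_of_degree_pos f _ hdeg] at hν'
  obtain ⟨μ, hμ, rfl⟩ := hν'
  simp [h μ (hasEigenvalue_iff_mem_spectrum.mpr hμ)]

end Module.End

namespace Representation

variable {G K V : Type*} [Group G] [Field K] [AddCommGroup V] [Module K V]

def eigenspaceOfMemCenter (ρ : Representation K G V) {a : G} (ha : a ∈ Subgroup.center G)
    (μ : K) : Subrepresentation ρ where
  toSubmodule := End.eigenspace (ρ a) μ
  apply_mem_toSubmodule g :=
    End.mapsTo_genEigenspace_of_comm (by
      rw [Commute, SemiconjBy, ← map_mul, ← map_mul, Subgroup.mem_center_iff.mp ha g]) μ 1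

variable [FiniteDimensional K V]

theorem pow_finrank_eigenspace_eq_one (ρ : Representation K G V) {a : G}
    (ha : a ∈ Subgroup.center G) (hab : Abelianization.of a = 1) (μ : K) :
    μ ^ finrank K (End.eigenspace (ρ a) μ) = 1 := by
  let σ := (eigenspaceOfMemCenter ρ ha μ).toRepresentation
  let χ : G →* Kˣ := (LinearMap.det.comp σ).toHomUnits
  have hχ : χ a = 1 := by
    rw [← Abelianization.lift_apply_of χ a, hab, map_one]
  have hσ : σ a = μ • 1 := by
    ext v
    exact End.mem_eigenspace_iff.mp v.2
  calc μ ^ finrank K (End.eigenspace (ρ a) μ) = LinearMap.det (σ a) := by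
        rw [hσ, LinearMap.det_smul, map_one, mul_one]; rfl
    _ = 1 := congrArg Units.val hχ

theorem pow_factorial_finrank_eq_one_of_hasEigenvalue (ρ : Representation K G V) {a : G}
    (ha : a ∈ Subgroup.center G) (hab : Abelianization.of a = 1) {μ : K}
    (hμ : End.HasEigenvalue (ρ a) μ) : μ ^ (finrank K V).factorial = 1 := by
  obtain ⟨k, hk⟩ : finrank K (End.eigenspace (ρ a) μ) ∣ _ :=
    Nat.dvd_factorial (End.pos_finrank_genEigenspace_of_hasEigenvalue hμ one_pos)
      (Submodule.finrank_le _)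
  rw [hk, pow_mul, pow_finrank_eigenspace_eq_one ρ ha hab, one_pow]

end Representation

theorem abelianization_kernel_on_central_abelian_is_torsion_general
    {F : Type*} [Field F] {d : ℕ}
    (G A : Subgroup (GL (Fin d) F))
    (hcent : ∀ a ∈ A, ∀ g ∈ G, a * g = g * a)
    (hunip : ∀ a ∈ A, ((a : Matrix (Fin d) (Fin d) F) - 1) ^ d = 0 →
      IsOfFinOrder a) :
    ∀ a : G, (a : GL (Fin d) F) ∈ A →
      Abelianization.of a = (1 : Abelianization G) → IsOfFinOrder a := by
  intro a haA hab
  let ρ : Representation (AlgebraicClosure F) G (Fin d → AlgebraicClosure F) :=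
    (Matrix.GeneralLinearGroup.baseChangeRepresentation _).comp G.subtype
  have hcenter : a ∈ Subgroup.center G :=
    Subgroup.mem_center_iff.mpr fun g => Subtype.ext (hcent _ haA _ g.2).symm
  have hn : d.factorial ≠ 0 := d.factorial_ne_zero
  have heigenvalue : ∀ μ, End.HasEigenvalue (ρ a) μ → μ ^ d.factorial = 1 := fun _ hμ => by
    simpa only [finrank_fin_fun] using
      ρ.pow_factorial_finrank_eq_one_of_hasEigenvalue hcenter hab hμ
  have hunipotent : ((ρ a) ^ d.factorial - 1) ^ d = 0 := by
    simpa only [finrank_fin_fun] using End.pow_sub_one_pow_finrank_eq_zero hn heigenvalue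
  have hfin := hunip _ (pow_mem haA d.factorial) <| by
    rw [Units.val_pow_eq_pow_val]
    exact Matrix.GeneralLinearGroup.pow_sub_one_pow_eq_zero_of_baseChangeRepresentation hunipotent
  exact Submonoid.isOfFinOrder_coe.mp (hfin.of_pow hn)

/-- Let `G` be a linear group and `A` an abelian subgroup central in `G`.
If every unipotent element of `A` has finite order, then the kernel of the
restriction to `A` of the abelianisation map of `G` is a torsion group.
(Here an element of `GL(d, F)` is unipotent iff `(M - 1) ^ d = 0`, i.e. all
eigenvalues over the algebraic closure equal `1`.) -/
theorem abelianization_kernel_on_central_abelian_is_torsion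
    {F : Type*} [Field F] {d : ℕ}
    (G A : Subgroup (GL (Fin d) F)) (hAG : A ≤ G)
    (hcent : ∀ a ∈ A, ∀ g ∈ G, a * g = g * a)
    (hunip : ∀ a ∈ A, ((a : Matrix (Fin d) (Fin d) F) - 1) ^ d = 0 →
      IsOfFinOrder a) :
    ∀ a : G, (a : GL (Fin d) F) ∈ A →
      Abelianization.of a = (1 : Abelianization G) → IsOfFinOrder a :=
  abelianization_kernel_on_central_abelian_is_torsion_general G A hcent hunip
end

section
/- Let f : ℤ^m → [0,∞) be a ℤ-norm: f(a+b) ≤ f(a)+f(b), f(na) = |n|·f(a) for n ∈ ℤ, and f(a) = 0 iff a = 0. Suppose f is discrete: there is c > 0 with f(a) ≥ c for all a ≠ 0. Then f extends to an ℝ-norm on ℝ^m, and consequently there exists k > 0 with f(n₁,...,n_m) ≥ k(|n₁| + ... + |n_m|) for all (n₁,...,n_m) ∈ ℤ^m. -/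
/-!
A `ℤ`-seminorm `f` on `ℤ^ι` is Lipschitz for the sup distance, with constant
`C = ∑ᵢ f(eᵢ)`. Hence `f ⌊n x⌋ / n` converges (Fekete) for every `x : ℝ^ι`, and the limit
can be computed along any lattice sequence `aₙ` staying at bounded distance from `n x`.
Choosing suitable such sequences shows that the limit `N` is subadditive, `ℤ`-homogeneous
and `C`-Lipschitz and extends `f`; by density of `ℚ` it is `ℝ`-homogeneous.
If `N x ≤ 0` for some `x ≠ 0`, Dirichlet's simultaneous approximation gives a lattice point
`a ≠ 0` within `δ` of a multiple `p x`, so `f a ≤ N (p x) + C δ < c`, contradicting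
discreteness. Finally a continuous positive homogeneous function dominates a multiple of
the norm (minimum on the unit sphere), and the `ℓ¹` norm is at most `m` times the sup norm.
-/

open Filter Topology

section LatticeApproximation

variable {ι : Type*}

def Pi.intCastHom (ι : Type*) : (ι → ℤ) →+ (ι → ℝ) := (Int.castAddHom ℝ).compLeft ι

@[simp]
theorem Pi.intCastHom_apply (a : ι → ℤ) (i : ι) : Pi.intCastHom ι a i = a i := rfl

variable [Fintype ι]

theorem dist_intCastHom_floor_le (y : ι → ℝ) :
    dist (Pi.intCastHom ι (Int.floor ∘ y)) y ≤ 1 := by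
  refine (dist_pi_le_iff zero_le_one).2 fun i => ?_
  rw [Real.dist_eq, abs_sub_comm, Pi.intCastHom_apply, Function.comp_apply, ← Int.fract,
    abs_of_nonneg (Int.fract_nonneg _)]
  exact (Int.fract_lt_one _).le

theorem dist_intCastHom_floor_add_floor_le (y z : ι → ℝ) :
    dist (Pi.intCastHom ι (Int.floor ∘ y + Int.floor ∘ z)) (y + z) ≤ 2 := by
  rw [map_add, ← one_add_one_eq_two]
  exact (dist_add_add_le _ _ _ _).trans
    (add_le_add (dist_intCastHom_floor_le y) (dist_intCastHom_floor_le z))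

theorem IsCompact.exists_lt_dist_lt {X : Type*} [PseudoMetricSpace X] {s : Set X}
    (hs : IsCompact s) {u : ℕ → X} (hu : ∀ n, u n ∈ s) {ε : ℝ} (hε : 0 < ε) :
    ∃ m n, m < n ∧ dist (u n) (u m) < ε := by
  obtain ⟨l, -, φ, hφ, hlim⟩ := hs.tendsto_subseq hu
  obtain ⟨N, hN⟩ := Metric.cauchySeq_iff'.1 hlim.cauchySeq ε hε
  exact ⟨φ N, φ (N + 1), hφ N.lt_succ_self, hN _ N.le_succ⟩

/-- Dirichlet's simultaneous approximation theorem (without the bound on `p`). -/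
theorem exists_dist_intCastHom_lt_smul (x : ι → ℝ) {δ : ℝ} (hδ : 0 < δ) :
    ∃ p : ℕ, 0 < p ∧ ∃ a : ι → ℤ, dist (Pi.intCastHom ι a) ((p : ℝ) • x) < δ := by
  set u : ℕ → ι → ℝ := fun n => (n : ℝ) • x - Pi.intCastHom ι (Int.floor ∘ ((n : ℝ) • x))
  have hu : ∀ n, u n ∈ Set.Icc (0 : ι → ℝ) 1 := fun n =>
    ⟨fun i => by simp [u, Int.fract_nonneg], fun i => by simp [u, (Int.fract_lt_one _).le]⟩
  obtain ⟨m, n, hmn, hdist⟩ := isCompact_Icc.exists_lt_dist_lt hu hδ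
  refine ⟨n - m, Nat.sub_pos_of_lt hmn, Int.floor ∘ ((n : ℝ) • x) - Int.floor ∘ ((m : ℝ) • x), ?_⟩
  rw [Nat.cast_sub hmn.le, sub_smul, map_sub]
  convert hdist using 1
  rw [dist_eq_norm, dist_eq_norm, ← norm_neg]
  congr 1
  simp only [u]
  abel

end LatticeApproximation

theorem exists_pos_mul_norm_le {E : Type*} [NormedAddCommGroup E] [NormedSpace ℝ E]
    [ProperSpace E] {N : E → ℝ} (hcont : Continuous N)
    (hsmul : ∀ (r : ℝ) x, N (r • x) = |r| * N x) (hpos : ∀ x, x ≠ 0 → 0 < N x) :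
    ∃ k, 0 < k ∧ ∀ x, k * ‖x‖ ≤ N x := by
  obtain ⟨k, hk, hkN⟩ := (isCompact_sphere (0 : E) 1).exists_forall_le' hcont.continuousOn
    fun x hx => hpos x (ne_zero_of_mem_unit_sphere ⟨x, hx⟩)
  refine ⟨k, hk, fun x => ?_⟩
  rcases eq_or_ne x 0 with rfl | hx
  · simpa using (hsmul 0 0).ge
  have hx' : 0 < ‖x‖ := norm_pos_iff.2 hx
  have hunit : ‖x‖⁻¹ • x ∈ Metric.sphere (0 : E) 1 := by
    simp [norm_smul, hx'.ne']
  calc k * ‖x‖ ≤ N (‖x‖⁻¹ • x) * ‖x‖ := mul_le_mul_of_nonneg_right (hkN _ hunit) hx'.le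
    _ = N x := by
      rw [hsmul, abs_inv, abs_norm]
      field_simp

structure IsZSeminorm {ι : Type*} (f : (ι → ℤ) → ℝ) : Prop where
  add_le : ∀ a b, f (a + b) ≤ f a + f b
  zsmul : ∀ (n : ℤ) a, f (n • a) = |(n : ℝ)| * f a

namespace IsZSeminorm

variable {ι : Type*} {f : (ι → ℤ) → ℝ}

theorem map_zero (hf : IsZSeminorm f) : f 0 = 0 := by
  simpa using hf.zsmul 0 0

theorem map_neg (hf : IsZSeminorm f) (a : ι → ℤ) : f (-a) = f a := by
  simpa using hf.zsmul (-1) a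

theorem nonneg (hf : IsZSeminorm f) (a : ι → ℤ) : 0 ≤ f a := by
  have := hf.add_le a (-a)
  rw [add_neg_cancel, hf.map_zero, hf.map_neg] at this
  linarith

variable [Fintype ι]

def lipConst [DecidableEq ι] (f : (ι → ℤ) → ℝ) : ℝ := ∑ i, f (Pi.single i 1)

theorem lipConst_nonneg [DecidableEq ι] (hf : IsZSeminorm f) : 0 ≤ lipConst f :=
  Finset.sum_nonneg fun _ _ => hf.nonneg _

theorem le_lipConst_mul_norm [DecidableEq ι] (hf : IsZSeminorm f) (a : ι → ℤ) :
    f a ≤ lipConst f * ‖Pi.intCastHom ι a‖ := by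
  calc f a = f (∑ i, a i • Pi.single i 1) := by
        congr 1; ext j; simp [Pi.single_apply]
    _ ≤ ∑ i, f (a i • Pi.single i 1) :=
      Finset.le_sum_of_subadditive f hf.map_zero.le hf.add_le _ _
    _ = ∑ i, |(a i : ℝ)| * f (Pi.single i 1) := by simp only [hf.zsmul]
    _ ≤ ∑ i, ‖Pi.intCastHom ι a‖ * f (Pi.single i 1) := by
      gcongr with i
      · exact hf.nonneg _
      · exact norm_le_pi_norm (Pi.intCastHom ι a) i
    _ = lipConst f * ‖Pi.intCastHom ι a‖ := by rw [← Finset.mul_sum, lipConst, mul_comm]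

theorem abs_sub_le [DecidableEq ι] (hf : IsZSeminorm f) (a b : ι → ℤ) :
    |f a - f b| ≤ lipConst f * dist (Pi.intCastHom ι a) (Pi.intCastHom ι b) := by
  have key : ∀ a b : ι → ℤ,
      f a - f b ≤ lipConst f * dist (Pi.intCastHom ι a) (Pi.intCastHom ι b) := by
    intro a b
    have := hf.add_le b (a - b)
    rw [add_sub_cancel] at this
    have := hf.le_lipConst_mul_norm (a - b)
    rw [map_sub, ← dist_eq_norm] at this
    linarith
  exact abs_sub_le_iff.2 ⟨key a b, dist_comm (Pi.intCastHom ι a) _ ▸ key b a⟩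

theorem abs_sub_le_of_dist_le [DecidableEq ι] (hf : IsZSeminorm f) (a b : ι → ℤ)
    (y : ι → ℝ) :
    |f a - f b| ≤ lipConst f * (dist (Pi.intCastHom ι a) y + dist (Pi.intCastHom ι b) y) :=
  (hf.abs_sub_le a b).trans <|
    mul_le_mul_of_nonneg_left (dist_triangle_right _ _ _) hf.lipConst_nonneg

theorem apply_floor_add_le [DecidableEq ι] (hf : IsZSeminorm f) (y z : ι → ℝ) :
    f (Int.floor ∘ (y + z)) ≤ f (Int.floor ∘ y) + f (Int.floor ∘ z) + 3 * lipConst f := by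
  have hclose := (le_abs_self _).trans
    (hf.abs_sub_le_of_dist_le (Int.floor ∘ (y + z)) (Int.floor ∘ y + Int.floor ∘ z) (y + z))
  have hdist := mul_le_mul_of_nonneg_left (add_le_add (dist_intCastHom_floor_le (y + z))
    (dist_intCastHom_floor_add_floor_le y z)) hf.lipConst_nonneg
  linarith [hf.add_le (Int.floor ∘ y) (Int.floor ∘ z)]

noncomputable def extension (f : (ι → ℤ) → ℝ) (x : ι → ℝ) : ℝ :=
  limUnder atTop fun n : ℕ => f (Int.floor ∘ ((n : ℝ) • x)) / n

theorem exists_tendsto_floor (hf : IsZSeminorm f) (x : ι → ℝ) :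
    ∃ l, Tendsto (fun n : ℕ => f (Int.floor ∘ ((n : ℝ) • x)) / n) atTop (𝓝 l) := by
  classical
  set u : ℕ → ℝ := fun n => f (Int.floor ∘ ((n : ℝ) • x)) + 3 * lipConst f
  have hu : Subadditive u := fun p q => by
    have := hf.apply_floor_add_le ((p : ℝ) • x) ((q : ℝ) • x)
    rw [← add_smul, ← Nat.cast_add] at this
    simp only [u]
    linarith [hf.lipConst_nonneg]
  have hbdd : BddBelow (Set.range fun n => u n / n) := ⟨0, by
    rintro _ ⟨n, rfl⟩
    have := hf.nonneg (Int.floor ∘ ((n : ℝ) • x))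
    have := hf.lipConst_nonneg
    positivity⟩
  exact ⟨hu.lim, by simpa [u, add_div] using
    (hu.tendsto_lim hbdd).sub (tendsto_const_div_atTop_nhds_zero_nat (3 * lipConst f))⟩

theorem tendsto_extension_floor (hf : IsZSeminorm f) (x : ι → ℝ) :
    Tendsto (fun n : ℕ => f (Int.floor ∘ ((n : ℝ) • x)) / n) atTop (𝓝 (extension f x)) :=
  tendsto_nhds_limUnder (hf.exists_tendsto_floor x)

theorem tendsto_extension (hf : IsZSeminorm f) {x : ι → ℝ} {a : ℕ → ι → ℤ} {B : ℝ}
    (ha : ∀ n : ℕ, dist (Pi.intCastHom ι (a n)) ((n : ℝ) • x) ≤ B) :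
    Tendsto (fun n : ℕ => f (a n) / n) atTop (𝓝 (extension f x)) := by
  classical
  refine (hf.tendsto_extension_floor x).congr_dist <| squeeze_zero (fun _ => dist_nonneg)
    (fun n => ?_) (tendsto_const_div_atTop_nhds_zero_nat (lipConst f * (1 + B)))
  rw [Real.dist_eq, ← sub_div, abs_div, Nat.abs_cast]
  gcongr
  exact (hf.abs_sub_le_of_dist_le _ _ _).trans <| mul_le_mul_of_nonneg_left
    (add_le_add (dist_intCastHom_floor_le _) (ha n)) hf.lipConst_nonneg

theorem extension_intCastHom (hf : IsZSeminorm f) (a : ι → ℤ) :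
    extension f (Pi.intCastHom ι a) = f a := by
  refine tendsto_nhds_unique (hf.tendsto_extension (a := fun n => (n : ℤ) • a) (B := 0)
    fun n => by rw [map_zsmul, ← Int.cast_smul_eq_zsmul ℝ, Int.cast_natCast, dist_self])
    (tendsto_const_nhds.congr' ?_)
  filter_upwards [eventually_ne_atTop 0] with n hn
  rw [hf.zsmul]
  field_simp
  simp

theorem extension_add_le (hf : IsZSeminorm f) (x y : ι → ℝ) :
    extension f (x + y) ≤ extension f x + extension f y := by
  refine le_of_tendsto_of_tendsto'
    (hf.tendsto_extension (a := fun n => Int.floor ∘ ((n : ℝ) • x) + Int.floor ∘ ((n : ℝ) • y))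
      (B := 2) fun n => ?_)
    ((hf.tendsto_extension_floor x).add (hf.tendsto_extension_floor y)) fun n => ?_
  · rw [smul_add]
    exact dist_intCastHom_floor_add_floor_le _ _
  · rw [← add_div]
    gcongr
    exact hf.add_le _ _

theorem extension_zsmul (hf : IsZSeminorm f) (k : ℤ) (x : ι → ℝ) :
    extension f ((k : ℝ) • x) = |(k : ℝ)| * extension f x := by
  refine tendsto_nhds_unique (hf.tendsto_extension (a := fun n => k • Int.floor ∘ ((n : ℝ) • x))
    (B := |(k : ℝ)|) fun n => ?_) ?_
  · rw [map_zsmul, ← Int.cast_smul_eq_zsmul ℝ, smul_comm, dist_smul₀, Real.norm_eq_abs]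
    exact mul_le_of_le_one_right (abs_nonneg _) (dist_intCastHom_floor_le _)
  · simp only [hf.zsmul, mul_div_assoc]
    exact (hf.tendsto_extension_floor x).const_mul _

theorem extension_le_add_mul_dist [DecidableEq ι] (hf : IsZSeminorm f) (x y : ι → ℝ) :
    extension f x ≤ extension f y + lipConst f * dist x y := by
  set C := lipConst f
  have hC : 0 ≤ C := hf.lipConst_nonneg
  have hlim : Tendsto (fun n : ℕ => f (Int.floor ∘ ((n : ℝ) • y)) / n + C * dist x y + 2 * C / n)
      atTop (𝓝 (extension f y + C * dist x y)) := by
    simpa using ((hf.tendsto_extension_floor y).add_const (C * dist x y)).add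
      (tendsto_const_div_atTop_nhds_zero_nat (2 * C))
  refine le_of_tendsto_of_tendsto (hf.tendsto_extension_floor x) hlim ?_
  filter_upwards [eventually_gt_atTop 0] with n hn
  have hx : dist (Pi.intCastHom ι (Int.floor ∘ ((n : ℝ) • x))) ((n : ℝ) • y)
      ≤ 1 + n * dist x y := by
    refine (dist_triangle _ ((n : ℝ) • x) _).trans (add_le_add (dist_intCastHom_floor_le _) ?_)
    rw [dist_smul₀, Real.norm_natCast]
  have hxy := (le_abs_self _).trans (hf.abs_sub_le_of_dist_le (Int.floor ∘ ((n : ℝ) • x))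
    (Int.floor ∘ ((n : ℝ) • y)) ((n : ℝ) • y))
  have hdist := mul_le_mul_of_nonneg_left
    (add_le_add hx (dist_intCastHom_floor_le ((n : ℝ) • y))) hC
  calc f (Int.floor ∘ ((n : ℝ) • x)) / n
      ≤ (f (Int.floor ∘ ((n : ℝ) • y)) + C * (n * dist x y + 2)) / n := by
        gcongr
        linarith
    _ = f (Int.floor ∘ ((n : ℝ) • y)) / n + C * dist x y + 2 * C / n := by
        field_simp
        ring

theorem continuous_extension (hf : IsZSeminorm f) : Continuous (extension f) := by
  classical
  exact (LipschitzWith.of_le_add_mul' _ hf.extension_le_add_mul_dist).continuous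

theorem extension_ratCast_smul (hf : IsZSeminorm f) (q : ℚ) (x : ι → ℝ) :
    extension f ((q : ℝ) • x) = |(q : ℝ)| * extension f x := by
  have hden : (0 : ℝ) < q.den := by positivity
  have hnum : (q : ℝ) * q.den = q.num := by exact_mod_cast Rat.mul_den_eq_num q
  have h := hf.extension_zsmul q.den ((q : ℝ) • x)
  rw [smul_smul, Int.cast_natCast, mul_comm, hnum, hf.extension_zsmul, Nat.abs_cast] at h
  have habs : |(q : ℝ)| = |(q.num : ℝ)| / q.den := by
    rw [← hnum, abs_mul, Nat.abs_cast, mul_div_cancel_right₀ _ hden.ne']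
  rw [habs, div_mul_eq_mul_div, h]
  field_simp

theorem extension_smul (hf : IsZSeminorm f) (r : ℝ) (x : ι → ℝ) :
    extension f (r • x) = |r| * extension f x := by
  have key := (hf.continuous_extension.comp (continuous_id.smul continuous_const)).ext_on
    Rat.denseRange_cast (continuous_abs.mul continuous_const)
    (fun _ ⟨q, hq⟩ => hq ▸ hf.extension_ratCast_smul q x)
  exact congrFun key r

theorem extension_pos (hf : IsZSeminorm f) {c : ℝ} (hc : 0 < c)
    (hdisc : ∀ a, a ≠ 0 → c ≤ f a) {x : ι → ℝ} (hx : x ≠ 0) : 0 < extension f x := by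
  classical
  by_contra! hN
  set C := lipConst f
  have hC : 0 ≤ C := hf.lipConst_nonneg
  set δ := min ‖x‖ (c / (C + 1))
  have hδ : 0 < δ := lt_min (norm_pos_iff.2 hx) (by positivity)
  obtain ⟨p, hp, a, ha⟩ := exists_dist_intCastHom_lt_smul x hδ
  have ha0 : a ≠ 0 := by
    rintro rfl
    rw [(Pi.intCastHom ι).map_zero, dist_zero_left, norm_smul, Real.norm_natCast] at ha
    have : ‖x‖ ≤ p * ‖x‖ := le_mul_of_one_le_left (norm_nonneg _) (by exact_mod_cast hp)
    linarith [min_le_left ‖x‖ (c / (C + 1))]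
  have hpN : extension f ((p : ℝ) • x) ≤ 0 := by
    have := hf.extension_zsmul p x
    rw [Int.cast_natCast] at this
    rw [this]
    exact mul_nonpos_of_nonneg_of_nonpos (abs_nonneg _) hN
  have hCδ : C * δ < c := by
    calc C * δ ≤ C * (c / (C + 1)) := mul_le_mul_of_nonneg_left (min_le_right _ _) hC
      _ < c := by
        rw [mul_div_assoc', div_lt_iff₀ (by positivity)]
        linarith
  have hfa := hf.extension_le_add_mul_dist (Pi.intCastHom ι a) ((p : ℝ) • x)
  rw [hf.extension_intCastHom] at hfa
  have := mul_le_mul_of_nonneg_left ha.le hC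
  linarith [hdisc a ha0]

theorem extension_eq_zero_iff (hf : IsZSeminorm f) {c : ℝ} (hc : 0 < c)
    (hdisc : ∀ a, a ≠ 0 → c ≤ f a) (x : ι → ℝ) : extension f x = 0 ↔ x = 0 :=
  ⟨fun h => by_contra fun hx => (hf.extension_pos hc hdisc hx).ne' h,
    by rintro rfl; simpa [hf.map_zero] using hf.extension_intCastHom 0⟩

end IsZSeminorm

open IsZSeminorm in
theorem discrete_znorm_extends_and_l1_bound_general
    {m : ℕ} (f : (Fin m → ℤ) → ℝ)
    (hsub : ∀ a b, f (a + b) ≤ f a + f b)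
    (hhom : ∀ (n : ℤ) (a), f (n • a) = |(n : ℝ)| * f a)
    (c : ℝ) (hc : 0 < c) (hdisc : ∀ a, a ≠ 0 → c ≤ f a) :
    (∃ N : (Fin m → ℝ) → ℝ,
      (∀ x y, N (x + y) ≤ N x + N y) ∧
      (∀ (r : ℝ) (x), N (r • x) = |r| * N x) ∧
      (∀ x, N x = 0 ↔ x = 0) ∧
      (∀ a : Fin m → ℤ, N (fun i => (a i : ℝ)) = f a)) ∧
    ∃ k : ℝ, 0 < k ∧ ∀ a : Fin m → ℤ, k * (∑ i, |(a i : ℝ)|) ≤ f a := by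
  have hf : IsZSeminorm f := ⟨hsub, hhom⟩
  refine ⟨⟨extension f, hf.extension_add_le, hf.extension_smul,
    hf.extension_eq_zero_iff hc hdisc, hf.extension_intCastHom⟩, ?_⟩
  obtain ⟨k, hk, hkN⟩ := exists_pos_mul_norm_le hf.continuous_extension hf.extension_smul
    fun x hx => hf.extension_pos hc hdisc hx
  refine ⟨k / (m + 1), by positivity, fun a => ?_⟩
  have hl1 : ∑ i, |(a i : ℝ)| ≤ (m + 1) * ‖Pi.intCastHom (Fin m) a‖ := by
    have := Pi.sum_norm_apply_le_norm (Pi.intCastHom (Fin m) a)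
    simp only [Pi.intCastHom_apply, Real.norm_eq_abs, Fintype.card_fin, nsmul_eq_mul] at this
    linarith [norm_nonneg (Pi.intCastHom (Fin m) a)]
  calc k / (m + 1) * ∑ i, |(a i : ℝ)| ≤ k * ‖Pi.intCastHom (Fin m) a‖ := by
        rw [div_mul_eq_mul_div, div_le_iff₀ (by positivity), mul_assoc, mul_comm _ (_ + 1)]
        exact mul_le_mul_of_nonneg_left hl1 hk.le
    _ ≤ extension f (Pi.intCastHom (Fin m) a) := hkN _
    _ = f a := hf.extension_intCastHom a

/-- A discrete `ℤ`-norm on `ℤᵐ` extends to an `ℝ`-norm on `ℝᵐ`, and is hence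
bounded below by a positive multiple of the `ℓ¹` norm. -/
theorem discrete_znorm_extends_and_l1_bound
    {m : ℕ} (f : (Fin m → ℤ) → ℝ)
    (hpos : ∀ a, 0 ≤ f a)
    (hsub : ∀ a b, f (a + b) ≤ f a + f b)
    (hhom : ∀ (n : ℤ) (a), f (n • a) = |(n : ℝ)| * f a)
    (hzero : ∀ a, f a = 0 ↔ a = 0)
    (c : ℝ) (hc : 0 < c) (hdisc : ∀ a, a ≠ 0 → c ≤ f a) :
    (∃ N : (Fin m → ℝ) → ℝ,
      (∀ x y, N (x + y) ≤ N x + N y) ∧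
      (∀ (r : ℝ) (x), N (r • x) = |r| * N x) ∧
      (∀ x, N x = 0 ↔ x = 0) ∧
      (∀ a : Fin m → ℤ, N (fun i => (a i : ℝ)) = f a)) ∧
    ∃ k : ℝ, 0 < k ∧ ∀ a : Fin m → ℤ, k * (∑ i, |(a i : ℝ)|) ≤ f a :=
  discrete_znorm_extends_and_l1_bound_general f hsub hhom c hc hdisc
end

section
/- Let G be a finitely generated group with uniformly undistorted cyclic subgroups, meaning there is c > 0 such that the translation length τ(g) = lim l_S(gⁿ)/n satisfies τ(g) ≥ c for every infinite order element g. Then every finitely generated abelian subgroup A of G is undistorted in G: there is k > 0 such that l_A(a) ≤ (1/k)·l_S(a) for all a ∈ A, where l_A is word length with respect to a finite generating set of A. -/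
/-!
By the structure theorem, `A = ψ(ℤ^d) · F` with `ψ` injective and `F` a finite set of torsion
elements. The translation length `τ` is homogeneous, subadditive on commuting elements and blind
to torsion, so `N v := τ (ψ v)` is a "norm" on `ℤ^d` that is at least `c` on nonzero vectors.
Such a function dominates `ε ‖v‖∞`: approximating `v / ‖v‖` by `p / q` with `q ≤ Q^d`
(Dirichlet) writes `‖v‖ • p = q • v - w` with `w` short, so
`‖v‖ c ≤ ‖v‖ N p ≤ Q^d N v + N w ≤ Q^d N v + ‖v‖ c / 2`.
Since `τ ≤ l_S` and the word length in `A` of `ψ v · f` is at most `d ‖v‖ + 1`, `A` is undistorted.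
-/

open Filter

/-- Word length with respect to a generating set `S` (using letters from
`S ∪ S⁻¹`). -/
noncomputable def wordLength {G : Type*} [Group G] (S : Set G) (g : G) : ℕ :=
  sInf {n | ∃ l : List G, l.length = n ∧ (∀ x ∈ l, x ∈ S ∨ x⁻¹ ∈ S) ∧ l.prod = g}

namespace wordLength

variable {G : Type*} [Group G] {S : Set G}

theorem le_length {g : G} (l : List G) (hl : ∀ x ∈ l, x ∈ S ∨ x⁻¹ ∈ S) (hg : l.prod = g) :
    wordLength S g ≤ l.length :=
  Nat.sInf_le ⟨l, rfl, hl, hg⟩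

theorem exists_list (hS : Subgroup.closure S = ⊤) (g : G) :
    ∃ l : List G, l.length = wordLength S g ∧ (∀ x ∈ l, x ∈ S ∨ x⁻¹ ∈ S) ∧ l.prod = g := by
  have hg : g ∈ Submonoid.closure (S ∪ S⁻¹) := by
    rw [← Subgroup.closure_toSubmonoid, hS]
    trivial
  obtain ⟨l, hl, hprod⟩ := Submonoid.exists_list_of_mem_closure hg
  exact Nat.sInf_mem (s := {n | ∃ l : List G, l.length = n ∧ (∀ x ∈ l, x ∈ S ∨ x⁻¹ ∈ S) ∧
    l.prod = g}) ⟨l.length, l, rfl, hl, hprod⟩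

@[simp]
theorem one : wordLength S (1 : G) = 0 :=
  Nat.le_zero.mp (le_length [] (by simp) rfl)

theorem le_one_of_mem {g : G} (hg : g ∈ S) : wordLength S g ≤ 1 :=
  le_length [g] (by simp [hg]) (by simp)

theorem one_le (hS : Subgroup.closure S = ⊤) {g : G} (hg : g ≠ 1) : 1 ≤ wordLength S g := by
  obtain ⟨l, hlen, -, hprod⟩ := exists_list hS g
  refine Nat.one_le_iff_ne_zero.mpr fun h => hg ?_
  rw [h, List.length_eq_zero_iff] at hlen
  simp [← hprod, hlen]

theorem mul_le (hS : Subgroup.closure S = ⊤) (g h : G) :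
    wordLength S (g * h) ≤ wordLength S g + wordLength S h := by
  obtain ⟨l₁, hlen₁, hl₁, rfl⟩ := exists_list hS g
  obtain ⟨l₂, hlen₂, hl₂, rfl⟩ := exists_list hS h
  rw [← hlen₁, ← hlen₂, ← List.length_append, ← List.prod_append]
  exact le_length _ (fun x hx => (List.mem_append.mp hx).elim (hl₁ x) (hl₂ x)) rfl

theorem inv_le (hS : Subgroup.closure S = ⊤) (g : G) : wordLength S g⁻¹ ≤ wordLength S g := by
  obtain ⟨l, hlen, hl, rfl⟩ := exists_list hS g
  rw [← hlen, List.prod_inv_reverse]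
  refine (le_length _ (fun x hx => ?_) rfl).trans (by simp)
  obtain ⟨y, hy, rfl⟩ := List.mem_map.mp (List.mem_reverse.mp hx)
  simpa [or_comm] using hl y hy

theorem inv (hS : Subgroup.closure S = ⊤) (g : G) : wordLength S g⁻¹ = wordLength S g :=
  le_antisymm (inv_le hS g) (by simpa using inv_le hS g⁻¹)

theorem pow_le (hS : Subgroup.closure S = ⊤) (g : G) (n : ℕ) :
    wordLength S (g ^ n) ≤ n * wordLength S g := by
  induction n with
  | zero => simp
  | succ n ih =>
    rw [pow_succ, add_one_mul]
    exact (mul_le hS _ _).trans (by omega)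

theorem zpow_le (hS : Subgroup.closure S = ⊤) (g : G) (k : ℤ) :
    wordLength S (g ^ k) ≤ k.natAbs * wordLength S g := by
  obtain ⟨n, rfl | rfl⟩ := Int.eq_nat_or_neg k
  · simpa using pow_le hS g n
  · simpa [inv hS] using pow_le hS g n

end wordLength

theorem Real.exists_nat_forall_abs_mul_sub_lt {ι : Type*} [Fintype ι] (x : ι → ℝ) {Q : ℕ}
    (hQ : 0 < Q) :
    ∃ q : ℕ, 0 < q ∧ q ≤ Q ^ Fintype.card ι ∧ ∃ p : ι → ℤ, ∀ i, |q * x i - p i| < 1 / Q := by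
  classical
  have hQ' : (0 : ℝ) < Q := by exact_mod_cast hQ
  -- pigeonhole: the fractional parts of `j • x`, `j ≤ Q ^ d`, in `Q ^ d` boxes of side `1 / Q`
  let box : Fin (Q ^ Fintype.card ι + 1) → ι → Fin Q := fun j i =>
    ⟨⌊Int.fract ((j : ℕ) * x i) * Q⌋₊, (Nat.floor_lt (by positivity)).mpr
      (by nlinarith [Int.fract_lt_one (((j : ℕ) : ℝ) * x i)])⟩
  have key : ∀ j l, j < l → box j = box l →
      ∃ q : ℕ, 0 < q ∧ q ≤ Q ^ Fintype.card ι ∧ ∃ p : ι → ℤ, ∀ i, |q * x i - p i| < 1 / Q := by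
    intro j l hjl hbox
    refine ⟨l - j, by omega, by omega, fun i => ⌊((l : ℕ) : ℝ) * x i⌋ - ⌊((j : ℕ) : ℝ) * x i⌋,
      fun i => ?_⟩
    have hsame : |Int.fract ((l : ℕ) * x i) * Q - Int.fract ((j : ℕ) * x i) * Q| < 1 := by
      refine Int.abs_sub_lt_one_of_floor_eq_floor ?_
      rw [← Int.natCast_floor_eq_floor (by positivity),
        ← Int.natCast_floor_eq_floor (by positivity)]
      exact congrArg (fun b => ((b i : ℕ) : ℤ)) hbox.symm
    rw [lt_div_iff₀ hQ', ← abs_of_pos hQ', ← abs_mul]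
    push_cast [Nat.cast_sub (show (j : ℕ) ≤ l from hjl.le)]
    rw [Int.fract, Int.fract] at hsame
    exact (congrArg abs (by ring)).trans_lt hsame
  obtain ⟨j, l, hne, hbox⟩ := Fintype.exists_ne_map_eq_of_card_lt box (by simp)
  rcases lt_or_gt_of_ne hne with h | h
  · exact key j l h hbox
  · exact key l j h hbox.symm

section Lattice

variable {ι : Type*} [Fintype ι]

theorem Int.exists_pi_norm_eq_natCast (v : ι → ℤ) : ∃ m : ℕ, ‖v‖ = m := by
  obtain ⟨m, hm⟩ : ∃ m : ℕ, (m : NNReal) = ‖v‖₊ := by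
    rw [Pi.nnnorm_def]
    refine Finset.sup_induction (p := fun x => ∃ m : ℕ, (m : NNReal) = x) ⟨0, by simp⟩
      (fun _ ⟨a, ha⟩ _ ⟨b, hb⟩ => ⟨max a b, ?_⟩) fun i _ => ⟨(v i).natAbs, ?_⟩
    · simp [← ha, ← hb]
    · ext; simp [Int.norm_eq_abs]
  exact ⟨m, by rw [← coe_nnnorm, ← hm]; rfl⟩

theorem exists_norm_smul_sub_smul_lt {v : ι → ℤ} (hv : v ≠ 0) {m : ℕ} (hm : ‖v‖ = m) {Q : ℕ}
    (hQ : 0 < Q) :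
    ∃ q : ℕ, 0 < q ∧ q ≤ Q ^ Fintype.card ι ∧
      ∃ p : ι → ℤ, p ≠ 0 ∧ ‖(q : ℤ) • v - (m : ℤ) • p‖ < m / Q := by
  have hM : (0 : ℝ) < m := hm ▸ norm_pos_iff.mpr hv
  have hQ' : (0 : ℝ) < Q := by exact_mod_cast hQ
  obtain ⟨q, hq, hqQ, p, hp⟩ := Real.exists_nat_forall_abs_mul_sub_lt (fun i => (v i : ℝ) / m) hQ
  have hw : ‖(q : ℤ) • v - (m : ℤ) • p‖ < m / Q := by
    refine (pi_norm_lt_iff (by positivity)).mpr fun i => ?_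
    calc ‖((q : ℤ) • v - (m : ℤ) • p) i‖ = m * |(q : ℝ) * (v i / m) - p i| := by
          have : ((((q : ℤ) • v - (m : ℤ) • p) i : ℤ) : ℝ) = m * (q * (v i / m) - p i) := by
            field_simp
            simp
          rw [Int.norm_eq_abs, this, abs_mul, abs_of_pos hM]
      _ < m * (1 / Q) := by gcongr; exact hp i
      _ = m / Q := by ring
  refine ⟨q, hq, hqQ, p, ?_, hw⟩
  rintro rfl
  have hQ1 : (1 : ℝ) ≤ Q := by exact_mod_cast hQ
  have hq1 : (1 : ℝ) ≤ q := by exact_mod_cast hq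
  rw [smul_zero, sub_zero, norm_smul, hm, norm_natCast] at hw
  have := div_le_self hM.le hQ1
  nlinarith

theorem le_norm_mul_sum_single_of_subadditive [DecidableEq ι] (N : (ι → ℤ) → ℝ)
    (hN : ∀ v, 0 ≤ N v) (hadd : ∀ v w, N (v + w) ≤ N v + N w)
    (hsmul : ∀ (k : ℤ) v, N (k • v) ≤ |k| * N v) (v : ι → ℤ) :
    N v ≤ ‖v‖ * ∑ i, N (Pi.single i 1) := by
  have hzero : N 0 ≤ 0 := by simpa using hsmul 0 0
  calc N v = N (∑ i, v i • Pi.single i 1) := by simp [← Pi.single_smul', Finset.univ_sum_single]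
    _ ≤ ∑ i, N (v i • Pi.single i 1) := Finset.le_sum_of_subadditive N hzero hadd _ _
    _ ≤ ∑ i, ‖v‖ * N (Pi.single i 1) := by
      gcongr with i
      refine (hsmul _ _).trans (mul_le_mul_of_nonneg_right ?_ (hN _))
      simpa [Int.norm_eq_abs] using norm_le_pi_norm v i
    _ = ‖v‖ * ∑ i, N (Pi.single i 1) := (Finset.mul_sum ..).symm

theorem exists_pos_mul_norm_le_of_subadditive (N : (ι → ℤ) → ℝ)
    (hadd : ∀ v w, N (v + w) ≤ N v + N w) (hsmul : ∀ (k : ℤ) v, N (k • v) = |k| * N v)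
    {c : ℝ} (hc : 0 < c) (hlb : ∀ v ≠ 0, c ≤ N v) :
    ∃ ε > 0, ∀ v, ε * ‖v‖ ≤ N v := by
  classical
  have hzero : N 0 = 0 := by simpa using hsmul 0 0
  have hN : ∀ v, 0 ≤ N v := fun v => by
    rcases eq_or_ne v 0 with rfl | hv
    exacts [hzero.ge, hc.le.trans (hlb v hv)]
  set B := ∑ i, N (Pi.single i 1)
  have hB : 0 ≤ B := Finset.sum_nonneg fun i _ => hN _
  have hlip := le_norm_mul_sum_single_of_subadditive N hN hadd fun k v => (hsmul k v).le
  -- `Q` makes the approximation error `N w ≤ ‖w‖ B < ‖v‖ B / Q` at most `‖v‖ c / 2`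
  obtain ⟨Q, hQ⟩ := exists_nat_gt (2 * B / c)
  have hQpos : (0 : ℝ) < Q := lt_of_le_of_lt (by positivity) hQ
  have hBQ : B / Q ≤ c / 2 := by
    rw [div_lt_iff₀ hc] at hQ
    rw [div_le_iff₀ hQpos]
    linarith
  refine ⟨c / (2 * Q ^ Fintype.card ι), by positivity, fun v => ?_⟩
  rcases eq_or_ne v 0 with rfl | hv
  · simp [hzero]
  obtain ⟨m, hm⟩ := Int.exists_pi_norm_eq_natCast v
  obtain ⟨q, hq, hqQ, p, hp, hw⟩ := exists_norm_smul_sub_smul_lt hv hm (Nat.cast_pos.mp hQpos)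
  set w := (q : ℤ) • v - (m : ℤ) • p
  have key : m * c ≤ Q ^ Fintype.card ι * N v + c / 2 * m :=
    calc m * c ≤ m * N p := by gcongr; exact hlb p hp
      _ = N ((m : ℤ) • p) := by rw [hsmul]; simp
      _ = N ((q : ℤ) • v + -w) := by simp only [w]; abel_nf
      _ ≤ N ((q : ℤ) • v) + N (-w) := hadd _ _
      _ = q * N v + N w := by rw [hsmul, ← neg_one_zsmul, hsmul]; simp
      _ ≤ Q ^ Fintype.card ι * N v + ‖w‖ * B := by
        gcongr
        · exact hN v
        · exact_mod_cast hqQ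
        · exact hlip w
      _ ≤ Q ^ Fintype.card ι * N v + m / Q * B := by gcongr
      _ ≤ Q ^ Fintype.card ι * N v + c / 2 * m := by
        rw [div_mul_comm, mul_comm]; gcongr
  rw [hm, div_mul_eq_mul_div, div_le_iff₀ (by positivity)]
  linarith

end Lattice

def IsTranslationLength {G : Type*} [Group G] (S : Set G) (τ : G → ℝ) : Prop :=
  ∀ g, Tendsto (fun n : ℕ => (wordLength S (g ^ n) : ℝ) / n) atTop (nhds (τ g))

namespace IsTranslationLength

variable {G : Type*} [Group G] {S : Set G} {τ : G → ℝ}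

theorem pow (hτ : IsTranslationLength S τ) (g : G) (m : ℕ) : τ (g ^ m) = m * τ g := by
  rcases Nat.eq_zero_or_pos m with rfl | hm
  · simpa using tendsto_nhds_unique (hτ 1) (by simp)
  have hsub := ((hτ g).comp (tendsto_id.const_mul_atTop' hm)).const_mul (m : ℝ)
  refine tendsto_nhds_unique (hτ (g ^ m)) (hsub.congr' ?_)
  filter_upwards [eventually_ne_atTop 0] with n hn
  simp only [Function.comp_apply, id, ← pow_mul, Nat.cast_mul]
  field_simp

theorem inv (hτ : IsTranslationLength S τ) (hS : Subgroup.closure S = ⊤) (g : G) :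
    τ g⁻¹ = τ g :=
  tendsto_nhds_unique (hτ g⁻¹) <| (hτ g).congr fun n => by rw [inv_pow, wordLength.inv hS]

theorem zpow (hτ : IsTranslationLength S τ) (hS : Subgroup.closure S = ⊤) (g : G) (k : ℤ) :
    τ (g ^ k) = |k| * τ g := by
  obtain ⟨n, rfl | rfl⟩ := Int.eq_nat_or_neg k
  · simp [hτ.pow]
  · simpa [hτ.inv hS] using hτ.pow g n

theorem mul_le (hτ : IsTranslationLength S τ) (hS : Subgroup.closure S = ⊤) {a b : G}
    (hab : Commute a b) : τ (a * b) ≤ τ a + τ b := by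
  refine le_of_tendsto_of_tendsto' (hτ (a * b)) ((hτ a).add (hτ b)) fun n => ?_
  rw [hab.mul_pow, ← add_div]
  gcongr
  exact_mod_cast wordLength.mul_le hS _ _

theorem le_wordLength (hτ : IsTranslationLength S τ) (hS : Subgroup.closure S = ⊤) (g : G) :
    τ g ≤ wordLength S g := by
  refine le_of_tendsto (hτ g) (eventually_atTop.mpr ⟨1, fun n hn => ?_⟩)
  rw [div_le_iff₀ (by exact_mod_cast hn), mul_comm]
  exact_mod_cast wordLength.pow_le hS g n

theorem mul_eq_of_isOfFinOrder (hτ : IsTranslationLength S τ) {g f : G} (hgf : Commute g f)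
    (hf : IsOfFinOrder f) : τ (g * f) = τ g := by
  have hm : (orderOf f : ℝ) ≠ 0 := by exact_mod_cast hf.orderOf_pos.ne'
  refine mul_left_cancel₀ hm ?_
  rw [← hτ.pow, ← hτ.pow, hgf.mul_pow, pow_orderOf_eq_one, mul_one]

theorem exists_pos_mul_norm_le (hτ : IsTranslationLength S τ) (hS : Subgroup.closure S = ⊤)
    {c : ℝ} (hc : 0 < c) (hτc : ∀ g, ¬IsOfFinOrder g → c ≤ τ g) {ι : Type*} [Fintype ι]
    {φ : Multiplicative (ι → ℤ) →* G} (hφ : Function.Injective φ) :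
    ∃ ε > 0, ∀ v, ε * ‖v‖ ≤ τ (φ (.ofAdd v)) := by
  refine exists_pos_mul_norm_le_of_subadditive _ (fun v w => ?_) (fun k v => ?_) hc
    fun v hv => hτc _ fun h => hv ?_
  · rw [ofAdd_add, map_mul]
    exact hτ.mul_le hS ((Commute.all _ _).map φ)
  · rw [ofAdd_zsmul, map_zpow, hτ.zpow hS]
  · exact (isOfFinAddOrder_iff_eq_zero v).mp
      (isOfFinOrder_ofAdd_iff.mp (hφ.isOfFinOrder_iff.mp h))

end IsTranslationLength

theorem CommGroup.exists_injective_lattice_mul_torsion (A : Type*) [CommGroup A] [Group.FG A] :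
    ∃ (ι : Type) (_ : Fintype ι) (ψ : Multiplicative (ι → ℤ) →* A) (F : Finset A),
      Function.Injective ψ ∧ (∀ f ∈ F, IsOfFinOrder f) ∧
        ∀ a, ∃ v, ∃ f ∈ F, ψ (.ofAdd v) * f = a := by
  classical
  obtain ⟨ι, j, _, _, p, hp, e, ⟨φ⟩⟩ := CommGroup.equiv_free_prod_prod_multiplicative_zmod A
  have : ∀ i, NeZero (p i ^ e i) := fun i => ⟨pow_ne_zero _ (hp i).ne_zero⟩
  let ψ : Multiplicative (j → ℤ) →* A :=
    φ.symm.toMonoidHom.comp ((MonoidHom.inl _ _).comp (MulEquiv.piMultiplicative _).toMonoidHom)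
  let tor : ((i : ι) → Multiplicative (ZMod (p i ^ e i))) →* A :=
    φ.symm.toMonoidHom.comp (MonoidHom.inr _ _)
  refine ⟨j, inferInstance, ψ, Finset.univ.image tor, ?_, ?_, fun a => ?_⟩
  · exact fun x y h => by simpa [ψ] using h
  · intro f hf
    obtain ⟨k, -, rfl⟩ := Finset.mem_image.mp hf
    exact tor.isOfFinOrder (isOfFinOrder_of_finite k)
  · refine ⟨fun i => ((φ a).1 i).toAdd, tor (φ a).2,
      Finset.mem_image_of_mem _ (Finset.mem_univ _), ?_⟩
    apply φ.injective
    simp [ψ, tor, MulEquiv.piMultiplicative]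

theorem MonoidHom.map_ofAdd_eq_prod_zpow {A : Type*} [CommGroup A] {ι : Type*} [Fintype ι]
    [DecidableEq ι] (ψ : Multiplicative (ι → ℤ) →* A) (v : ι → ℤ) :
    ψ (.ofAdd v) = ∏ i, ψ (.ofAdd (Pi.single i 1)) ^ v i := by
  conv_lhs => rw [← Finset.univ_sum_single v]
  rw [ofAdd_sum, map_prod]
  refine Finset.prod_congr rfl fun i _ => ?_
  rw [← map_zpow, ← ofAdd_zsmul, ← Pi.single_smul', smul_eq_mul, mul_one]

theorem exists_finset_closure_eq_top_wordLength_le {A : Type*} [CommGroup A] {ι : Type*}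
    [Fintype ι] (ψ : Multiplicative (ι → ℤ) →* A) (F : Finset A)
    (hψF : ∀ a, ∃ v, ∃ f ∈ F, ψ (.ofAdd v) * f = a) :
    ∃ T : Finset A, Subgroup.closure (T : Set A) = ⊤ ∧
      ∀ v, ∀ f ∈ F,
        (wordLength (T : Set A) (ψ (.ofAdd v) * f) : ℝ) ≤ Fintype.card ι * ‖v‖ + 1 := by
  classical
  set T := F ∪ Finset.univ.image fun i => ψ (.ofAdd (Pi.single i 1))
  have hT : Subgroup.closure (T : Set A) = ⊤ := by
    refine (Subgroup.eq_top_iff' _).mpr fun a => ?_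
    obtain ⟨v, f, hf, rfl⟩ := hψF a
    refine mul_mem ?_ (Subgroup.subset_closure (by simp [T, hf]))
    rw [ψ.map_ofAdd_eq_prod_zpow]
    exact prod_mem fun i _ => zpow_mem (Subgroup.subset_closure (by simp [T])) _
  have hlip := le_norm_mul_sum_single_of_subadditive
    (fun v => (wordLength (T : Set A) (ψ (.ofAdd v)) : ℝ)) (fun _ => by positivity)
    (fun v w => by rw [ofAdd_add, map_mul]; exact_mod_cast wordLength.mul_le hT _ _)
    (fun k v => by
      rw [ofAdd_zsmul, map_zpow, ← Nat.cast_natAbs]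
      exact_mod_cast wordLength.zpow_le hT _ k)
  refine ⟨T, hT, fun v f hf => ?_⟩
  calc (wordLength (T : Set A) (ψ (.ofAdd v) * f) : ℝ)
      ≤ wordLength (T : Set A) (ψ (.ofAdd v)) + wordLength (T : Set A) f := by
        exact_mod_cast wordLength.mul_le hT _ _
    _ ≤ ‖v‖ * ∑ _i : ι, (1 : ℝ) + 1 := by
        gcongr
        · refine (hlip v).trans ?_
          gcongr with i
          exact_mod_cast wordLength.le_one_of_mem (by simp [T])
        · exact_mod_cast wordLength.le_one_of_mem (by simp [T, hf])
    _ = Fintype.card ι * ‖v‖ + 1 := by simp [mul_comm]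

/-- If `G` has uniformly undistorted cyclic subgroups (translation lengths of
infinite order elements are bounded below by some `c > 0`), then every
finitely generated abelian subgroup `A` of `G` is undistorted in `G`. -/
theorem abelian_subgroups_undistorted_of_uniformly_undistorted_cyclic
    {G : Type*} [Group G] (S : Finset G)
    (hgen : Subgroup.closure (S : Set G) = ⊤)
    (tau : G → ℝ)
    (htau : ∀ g : G, Tendsto
      (fun n : ℕ => (wordLength (S : Set G) (g ^ n) : ℝ) / n) atTop
      (nhds (tau g)))
    (c : ℝ) (hc : 0 < c)
    (huniform : ∀ g : G, ¬ IsOfFinOrder g → c ≤ tau g)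
    (A : Subgroup G) (hab : ∀ a ∈ A, ∀ b ∈ A, a * b = b * a)
    (hAfg : Group.FG A) :
    ∃ T : Finset A, Subgroup.closure (T : Set A) = ⊤ ∧
      ∃ k : ℝ, 0 < k ∧ ∀ a : A,
        (wordLength (T : Set A) a : ℝ) ≤ (1 / k) * wordLength (S : Set G) (a : G) := by
  let _ : CommGroup A := { A.toGroup with mul_comm := fun a b => Subtype.ext (hab a a.2 b b.2) }
  have hτ : IsTranslationLength (S : Set G) tau := htau
  obtain ⟨ι, _, ψ, F, hψ, hF, hψF⟩ := CommGroup.exists_injective_lattice_mul_torsion A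
  obtain ⟨ε, hε, hτψ⟩ := hτ.exists_pos_mul_norm_le hgen hc huniform
    (φ := A.subtype.comp ψ) (A.subtype_injective.comp hψ)
  obtain ⟨T, hT, hTψ⟩ := exists_finset_closure_eq_top_wordLength_le ψ F hψF
  refine ⟨T, hT, 1 / (Fintype.card ι / ε + 1), by positivity, fun a => ?_⟩
  obtain ⟨v, f, hf, rfl⟩ := hψF a
  rcases eq_or_ne (ψ (.ofAdd v) * f) 1 with h1 | h1
  · simp [h1]
  have hS1 : (1 : ℝ) ≤ wordLength (S : Set G) (ψ (.ofAdd v) * f : A) := by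
    exact_mod_cast wordLength.one_le hgen (by exact_mod_cast h1)
  have hτa : tau (ψ (.ofAdd v) * f : A) = tau (ψ (.ofAdd v) : A) :=
    hτ.mul_eq_of_isOfFinOrder ((Commute.all _ _).map A.subtype) (A.subtype.isOfFinOrder (hF f hf))
  have hv : ε * ‖v‖ ≤ wordLength (S : Set G) (ψ (.ofAdd v) * f : A) :=
    (hτψ v).trans (hτa ▸ hτ.le_wordLength hgen _)
  rw [one_div_one_div]
  calc (wordLength (T : Set A) (ψ (.ofAdd v) * f) : ℝ)
      ≤ Fintype.card ι * ‖v‖ + 1 := hTψ v f hf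
    _ = Fintype.card ι / ε * (ε * ‖v‖) + 1 := by field_simp
    _ ≤ (Fintype.card ι / ε + 1) * wordLength (S : Set G) (ψ (.ofAdd v) * f : A) := by
      rw [add_mul, one_mul]; gcongr
end
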